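/- arXiv:2011.01660 — 5 statements merged into one kernel-verified Lean document; each statement's English description precedes it below -/
import Mathlib

section
/- Let M(z) = az + b (a ≠ 0) be an affine transformation of ℂ, p(z) = ∏_{j=1}^n (z - α_j), and p̃(z) = ∏_{j=1}^n (z - M(α_j)). Then for all z_i, z_1,…,ẑ_i,…,z_n at which both sides are defined, M(W_p(z_i; z_1,…,ẑ_i,…,z_n)) = W_{p̃}(M(z_i); M(z_1),…,M(ẑ_i),…,M(z_n)), where W_p(z_i; z_1,…,ẑ_i,…,z_n) = z_i - p(z_i)/∏_{j≠i}(z_i - z_j) is the Weierstrass update step. -/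
/-- Affine invariance of the Weierstrass step
`W_p(z_i; …) = z_i - p(z_i)/∏_{j≠i}(z_i - z_j)` for `p x = ∏_j (x - α j)`:
for `M x = a*x + b` with `a ≠ 0`,
`M (W_p(z_i;…)) = W_{p̃}(M z_i; M z_1, …, M z_n)` where `p̃` has roots `M (α j)`. -/
theorem stmt2 (n : ℕ) (a b : ℂ) (ha : a ≠ 0) (α z : Fin n → ℂ) (i : Fin n)
    (hz : ∀ j, j ≠ i → z i ≠ z j) :
    a * (z i - (∏ j, (z i - α j)) / ∏ j ∈ Finset.univ.erase i, (z i - z j)) + b =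
      (a * z i + b) -
        (∏ j, ((a * z i + b) - (a * α j + b))) /
          ∏ j ∈ Finset.univ.erase i, ((a * z i + b) - (a * z j + b)) := by
  have hD : (∏ j ∈ Finset.univ.erase i, (z i - z j)) ≠ 0 :=
    Finset.prod_ne_zero_iff.2 fun j hj => sub_ne_zero.2 (hz j (Finset.ne_of_mem_erase hj))
  have key : ∀ (f : Fin n → ℂ) (s : Finset (Fin n)),
      ∏ j ∈ s, ((a * z i + b) - (a * f j + b)) = a ^ s.card * ∏ j ∈ s, (z i - f j) := by
    intro f s
    rw [← Finset.prod_const, ← Finset.prod_mul_distrib]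
    exact Finset.prod_congr rfl fun j _ => by ring
  rw [key α, key z]
  have hn : 1 ≤ n := Nat.one_le_iff_ne_zero.2 (by rintro rfl; exact i.elim0)
  have hcard : (Finset.univ.erase i).card = n - 1 := by
    simp [Finset.card_erase_of_mem, Finset.card_univ]
  rw [Finset.card_univ, Fintype.card_fin, hcard]
  have hpow : a ^ n = a * a ^ (n - 1) := by
    rw [← pow_succ']
    congr 1
    omega
  rw [hpow, mul_div_mul_comm, mul_div_assoc]
  field_simp
  ring
end

section
/- Let M be a Möbius transformation, p(z) = ∏_{j=1}^n (z - α_j), and p̃(z) = ∏_{j=1}^n (z - M(α_j)). Then, wherever both sides are defined, M(EA_p(z_i; z_1,…,ẑ_i,…,z_n)) = EA_{p̃}(M(z_i); M(z_1),…,M(ẑ_i),…,M(z_n)), where EA is the Ehrlich–Aberth update step. -/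
/-- `q` associated to roots `β`, approximation vector `v` and index `i`. -/
noncomputable def eaQ (n : ℕ) (β v : Fin n → ℂ) (i : Fin n) : ℂ → ℂ :=
  fun x => (∏ j, (x - β j)) / ∏ j ∈ Finset.univ.erase i, (x - v j)

/-- The Ehrlich–Aberth update step `EA_p(v i; v_1,…,v̂_i,…,v_n) = v i - q(v i)/q'(v i)`
for the monic polynomial with roots `β`. -/
noncomputable def eaStep (n : ℕ) (β v : Fin n → ℂ) (i : Fin n) : ℂ :=
  v i - eaQ n β v i (v i) / deriv (eaQ n β v i) (v i)

/-- The Möbius transformation `z ↦ (a z + b)/(c z + d)` acting on finite points. -/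
noncomputable def mobiusMap (a b c d z : ℂ) : ℂ := (a * z + b) / (c * z + d)

/-!
The Ehrlich–Aberth step is the Newton step for `q_i`. Every factor `w - M u` of `q̃_i(M y)`
equals `Δ (y - u) / ((c y + d)(c u + d))` with `Δ = a d - b c`; since `q_i` has one more factor
in its numerator than in its denominator, `q̃_i ∘ M = K q_i / (c y + d)` for a constant `K ≠ 0`.
Newton's step commutes with `M` for any pair of functions related in this way: by the chain
rule both the value and the derivative of `q̃_i` at `M z_i` are explicit in those of `q_i`
at `z_i`, and the resulting identity is rational algebra.
-/

open Filter Topology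

noncomputable def newtonStep (f : ℂ → ℂ) (x : ℂ) : ℂ := x - f x / deriv f x

section Mobius

variable {a b c d : ℂ}

lemma mobiusMap_sub (u v : ℂ) (hu : c * u + d ≠ 0) (hv : c * v + d ≠ 0) :
    mobiusMap a b c d u - mobiusMap a b c d v
      = (a * d - b * c) * (u - v) / ((c * u + d) * (c * v + d)) := by
  unfold mobiusMap
  rw [div_sub_div _ _ hu hv]
  ring

lemma mobiusMap_ne_mobiusMap {u v : ℂ} (hM : a * d - b * c ≠ 0) (hu : c * u + d ≠ 0)
    (hv : c * v + d ≠ 0) (huv : u ≠ v) : mobiusMap a b c d u ≠ mobiusMap a b c d v := by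
  rw [← sub_ne_zero, mobiusMap_sub u v hu hv]
  exact div_ne_zero (mul_ne_zero hM (sub_ne_zero.mpr huv)) (mul_ne_zero hu hv)

lemma hasDerivAt_mobiusMap {x : ℂ} (hx : c * x + d ≠ 0) :
    HasDerivAt (mobiusMap a b c d) ((a * d - b * c) / (c * x + d) ^ 2) x := by
  have hnum : HasDerivAt (fun y : ℂ => a * y + b) a x := by
    simpa using ((hasDerivAt_id x).const_mul a).add_const b
  have hden : HasDerivAt (fun y : ℂ => c * y + d) c x := by
    simpa using ((hasDerivAt_id x).const_mul c).add_const d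
  exact (hnum.div hden hx).congr_deriv (by ring)

lemma prod_mobiusMap_sub {ι : Type*} (s : Finset ι) (u : ι → ℂ) {y : ℂ} (hy : c * y + d ≠ 0)
    (hu : ∀ j, c * u j + d ≠ 0) :
    ∏ j ∈ s, (mobiusMap a b c d y - mobiusMap a b c d (u j))
      = (a * d - b * c) ^ s.card * (∏ j ∈ s, (y - u j))
        / ((c * y + d) ^ s.card * ∏ j ∈ s, (c * u j + d)) := by
  rw [Finset.prod_congr rfl fun j _ => mobiusMap_sub y (u j) hy (hu j),
    Finset.prod_div_distrib, Finset.prod_mul_distrib, Finset.prod_mul_distrib,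
    Finset.prod_const, Finset.prod_const]

lemma mobiusMap_sub_div {x f₀ f₁ : ℂ} (hx : c * x + d ≠ 0) (hf₁ : f₁ ≠ 0)
    (hstep : c * (x - f₀ / f₁) + d ≠ 0) :
    mobiusMap a b c d (x - f₀ / f₁)
      = mobiusMap a b c d x
        - (a * d - b * c) * f₀ / ((c * x + d) * (f₁ * (c * x + d) - f₀ * c)) := by
  have hden : c * (x - f₀ / f₁) + d = (f₁ * (c * x + d) - f₀ * c) / f₁ := by
    field_simp
    ring
  have hF : f₁ * (c * x + d) - f₀ * c ≠ 0 := by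
    rw [hden] at hstep
    exact left_ne_zero_of_mul hstep
  unfold mobiusMap
  rw [hden]
  generalize hFdef : f₁ * (c * x + d) - f₀ * c = F at *
  field_simp
  rw [eq_div_iff (by rwa [mul_comm])]
  linear_combination (a * x + b) * hFdef

theorem mobiusMap_newtonStep {f g : ℂ → ℂ} {K x : ℂ} (hM : a * d - b * c ≠ 0) (hK : K ≠ 0)
    (hx : c * x + d ≠ 0) (hf : DifferentiableAt ℂ f x)
    (hg : DifferentiableAt ℂ g (mobiusMap a b c d x))
    (hgf : ∀ᶠ y in 𝓝 x, g (mobiusMap a b c d y) = K * f y / (c * y + d))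
    (hf' : deriv f x ≠ 0) (hstep : c * newtonStep f x + d ≠ 0) :
    mobiusMap a b c d (newtonStep f x) = newtonStep g (mobiusMap a b c d x) := by
  have hg₀ : g (mobiusMap a b c d x) = K * f x / (c * x + d) := hgf.self_of_nhds
  have hden : HasDerivAt (fun y : ℂ => c * y + d) c x := by
    simpa using ((hasDerivAt_id x).const_mul c).add_const d
  have hchain : deriv g (mobiusMap a b c d x) * ((a * d - b * c) / (c * x + d) ^ 2)
      = (K * deriv f x * (c * x + d) - K * f x * c) / (c * x + d) ^ 2 :=
    ((hg.hasDerivAt.comp x (hasDerivAt_mobiusMap hx)).congr_of_eventuallyEq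
      (EventuallyEq.symm hgf)).unique
      ((hf.hasDerivAt.const_mul K).div hden hx)
  have hg₁ : deriv g (mobiusMap a b c d x)
      = K * (deriv f x * (c * x + d) - f x * c) / (a * d - b * c) := by
    field_simp at hchain ⊢
    linear_combination hchain
  unfold newtonStep at hstep ⊢
  rw [mobiusMap_sub_div hx hf' hstep, hg₀, hg₁]
  congr 1
  field_simp

end Mobius

section EhrlichAberth

variable {n : ℕ} {β v : Fin n → ℂ} {i : Fin n}

lemma eaStep_eq_newtonStep : eaStep n β v i = newtonStep (eaQ n β v i) (v i) := rfl

lemma differentiableAt_eaQ {x : ℂ} (hx : ∀ j, j ≠ i → x ≠ v j) :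
    DifferentiableAt ℂ (eaQ n β v i) x := by
  have hD : ∏ j ∈ Finset.univ.erase i, (x - v j) ≠ 0 :=
    Finset.prod_ne_zero_iff.mpr fun j hj => sub_ne_zero.mpr (hx j (Finset.ne_of_mem_erase hj))
  exact (DifferentiableAt.fun_finsetProd fun j _ => differentiableAt_id.sub_const (β j)).div
    (DifferentiableAt.fun_finsetProd fun j _ => differentiableAt_id.sub_const (v j)) hD

lemma eaQ_mobiusMap {a b c d y : ℂ} (hM : a * d - b * c ≠ 0) (hy : c * y + d ≠ 0)
    (hβ : ∀ j, c * β j + d ≠ 0) (hv : ∀ j, c * v j + d ≠ 0) :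
    eaQ n (fun j => mobiusMap a b c d (β j)) (fun j => mobiusMap a b c d (v j)) i
        (mobiusMap a b c d y)
      = (a * d - b * c) * (∏ j ∈ Finset.univ.erase i, (c * v j + d)) / (∏ j, (c * β j + d))
        * eaQ n β v i y / (c * y + d) := by
  have hcard : (Finset.univ.erase i).card + 1 = (Finset.univ : Finset (Fin n)).card :=
    Finset.card_erase_add_one (Finset.mem_univ i)
  have hB : ∏ j ∈ Finset.univ.erase i, (c * v j + d) ≠ 0 :=
    Finset.prod_ne_zero_iff.mpr fun j _ => hv j
  have hA : ∏ j, (c * β j + d) ≠ 0 := Finset.prod_ne_zero_iff.mpr fun j _ => hβ j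
  unfold eaQ
  rw [prod_mobiusMap_sub _ _ hy hβ, prod_mobiusMap_sub _ _ hy hv, ← hcard]
  field_simp
  ring

end EhrlichAberth

theorem stmt3_general (n : ℕ) (a b c d : ℂ) (hM : a * d - b * c ≠ 0)
    (α z : Fin n → ℂ) (i : Fin n)
    (hz : ∀ j, j ≠ i → z i ≠ z j)
    (hdz : ∀ j, c * z j + d ≠ 0) (hdα : ∀ j, c * α j + d ≠ 0)
    (hdEA : c * eaStep n α z i + d ≠ 0)
    (hdef : deriv (eaQ n α z i) (z i) ≠ 0) :
    mobiusMap a b c d (eaStep n α z i) =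
      eaStep n (fun j => mobiusMap a b c d (α j)) (fun j => mobiusMap a b c d (z j)) i := by
  have hK : (a * d - b * c) * (∏ j ∈ Finset.univ.erase i, (c * z j + d))
      / (∏ j, (c * α j + d)) ≠ 0 :=
    div_ne_zero (mul_ne_zero hM (Finset.prod_ne_zero_iff.mpr fun j _ => hdz j))
      (Finset.prod_ne_zero_iff.mpr fun j _ => hdα j)
  simp only [eaStep_eq_newtonStep] at hdEA ⊢
  have hℓ : ∀ᶠ y in 𝓝 (z i), c * y + d ≠ 0 :=
    (by fun_prop : Continuous fun y : ℂ => c * y + d).continuousAt.eventually_ne (hdz i)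
  exact mobiusMap_newtonStep hM hK (hdz i) (differentiableAt_eaQ hz)
    (differentiableAt_eaQ fun j hj => mobiusMap_ne_mobiusMap hM (hdz i) (hdz j) (hz j hj))
    (hℓ.mono fun y hy => eaQ_mobiusMap hM hy hdα hdz) hdef hdEA

/-- Möbius invariance of the Ehrlich–Aberth step:
`M (EA_p(z_i; …)) = EA_{p̃}(M z_i; M z_1, …, M z_n)` wherever both sides are defined,
where `p̃` has roots `M (α j)`. -/
theorem stmt3 (n : ℕ) (a b c d : ℂ) (hM : a * d - b * c ≠ 0)
    (α z : Fin n → ℂ) (i : Fin n)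
    (hz : ∀ j, j ≠ i → z i ≠ z j)
    (hdz : ∀ j, c * z j + d ≠ 0) (hdα : ∀ j, c * α j + d ≠ 0)
    (hdEA : c * eaStep n α z i + d ≠ 0)
    (hdef : deriv (eaQ n α z i) (z i) ≠ 0)
    (hdef' : deriv (eaQ n (fun j => mobiusMap a b c d (α j))
        (fun j => mobiusMap a b c d (z j)) i) (mobiusMap a b c d (z i)) ≠ 0) :
    mobiusMap a b c d (eaStep n α z i) =
      eaStep n (fun j => mobiusMap a b c d (α j)) (fun j => mobiusMap a b c d (z j)) i :=
  stmt3_general n a b c d hM α z i hz hdz hdα hdEA hdef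
end

section
/- Let p(z) = ∏_{i=1}^4 (z - α_i) have four distinct roots in ℂ. Let {z_1, z_2} be the unique unordered pair harmonic to both {α_1, α_2} and {α_3, α_4}, and let {z_3, z_4} be the unique unordered pair harmonic to both {α_1, α_3} and {α_2, α_4}. Then the Jacobi Ehrlich–Aberth map sends (z_1, z_2, z_3, z_4) to (z_2, z_1, z_4, z_3); in particular, (z_1, z_2, z_3, z_4) is a periodic point of period dividing 2. -/
set_option maxHeartbeats 1000000


/-- The cross-ratio extended to the Riemann sphere (modeled as `Option ℂ`, `none` = ∞). -/
noncomputable def crossRatioP1 : Option ℂ → Option ℂ → Option ℂ → Option ℂ → ℂ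
  | none, some b, some c, some d => (b - d) / (b - c)
  | some a, none, some c, some d => (a - c) / (a - d)
  | some a, some b, none, some d => (b - d) / (a - d)
  | some a, some b, some c, none => (a - c) / (b - c)
  | some a, some b, some c, some d => ((a - c) * (b - d)) / ((a - d) * (b - c))
  | _, _, _, _ => 0

/-- The pairs `{x,y}` and `{u,v}` are harmonic if `CR(x,y,u,v) = -1`. -/
def Harmonic (x y u v : Option ℂ) : Prop := crossRatioP1 x y u v = -1

/-- The contribution `1/(z - w)` of a companion point `w ∈ ℙ¹(ℂ)` to the
electrostatic sum of the Ehrlich–Aberth step; the term for `w = ∞` vanishes. -/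
noncomputable def eaTerm (z : ℂ) : Option ℂ → ℂ
  | none => 0
  | some w => 1 / (z - w)

/-- The Ehrlich–Aberth update step for a monic degree-4 polynomial with (finite)
roots `α`, extended Möbius-equivariantly to `ℙ¹(ℂ)` (modeled as `Option ℂ`,
`none` = ∞): for finite `z` it is characterized by the field interpretation
`1/(z - z') = ∑_j 1/(z - α j) - ∑_i 1/(z - w i)` (with the convention that terms
involving `∞` vanish, and `z' = ∞` when the right-hand sum vanishes), and
`EA(∞; w₁,w₂,w₃) = ∑_j α j - ∑_i w i`. -/
noncomputable def eaStepP1 (α : Fin 4 → ℂ) (z : Option ℂ) (w : Fin 3 → Option ℂ) :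
    Option ℂ :=
  match z with
  | none => some ((∑ j, α j) - ∑ i, (w i).getD 0)
  | some z =>
      let s : ℂ := (∑ j, 1 / (z - α j)) - ∑ i, eaTerm z (w i)
      if s = 0 then none else some (z - 1 / s)

-- extraction lemmas
lemma harm_nn (u v : ℂ) (h : Harmonic none none (some u) (some v)) : False := by
  simp [Harmonic, crossRatioP1] at h

lemma harm_ns (y u v : ℂ) (h : Harmonic none (some y) (some u) (some v)) :
    y ≠ u ∧ y ≠ v ∧ 2*y = u + v := by
  have h' : (y - v) / (y - u) = -1 := h
  have hyu : y ≠ u := by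
    intro he; rw [he] at h'; simp at h'
  have hd : y - u ≠ 0 := sub_ne_zero.mpr hyu
  have he : y - v = -1 * (y - u) := (div_eq_iff hd).mp h'
  refine ⟨hyu, ?_, by linear_combination he⟩
  intro hv; rw [hv] at he; apply hd; linear_combination hv + he

lemma harm_sn (x u v : ℂ) (h : Harmonic (some x) none (some u) (some v)) :
    x ≠ u ∧ x ≠ v ∧ 2*x = u + v := by
  have h' : (x - u) / (x - v) = -1 := h
  have hxv : x ≠ v := by
    intro he; rw [he] at h'; simp at h'
  have hd : x - v ≠ 0 := sub_ne_zero.mpr hxv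
  have he : x - u = -1 * (x - v) := (div_eq_iff hd).mp h'
  refine ⟨?_, hxv, by linear_combination he⟩
  intro hu; rw [hu] at he; apply hd; linear_combination hu + he

lemma harm_ss (x y u v : ℂ) (h : Harmonic (some x) (some y) (some u) (some v)) :
    x ≠ u ∧ x ≠ v ∧ y ≠ u ∧ y ≠ v ∧ 2*x*y + 2*u*v = (x+y)*(u+v) := by
  have h' : ((x - u) * (y - v)) / ((x - v) * (y - u)) = -1 := h
  have hd : (x - v) * (y - u) ≠ 0 := by
    intro h0; rw [h0, div_zero] at h'; norm_num at h'
  have he : (x - u) * (y - v) = -1 * ((x - v) * (y - u)) := (div_eq_iff hd).mp h'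
  have hn : (x - u) * (y - v) ≠ 0 := by
    rw [he]; simpa using hd
  have hxv : x - v ≠ 0 := fun h0 => hd (by rw [h0, zero_mul])
  have hyu : y - u ≠ 0 := fun h0 => hd (by rw [h0, mul_zero])
  have hxu : x - u ≠ 0 := fun h0 => hn (by rw [h0, zero_mul])
  have hyv : y - v ≠ 0 := fun h0 => hn (by rw [h0, mul_zero])
  exact ⟨sub_ne_zero.mp hxu, sub_ne_zero.mp hxv, sub_ne_zero.mp hyu, sub_ne_zero.mp hyv,
    by linear_combination he⟩

-- congruence lemmas
lemma ea_congr (α α' : Fin 4 → ℂ) (z : Option ℂ) (w w' : Fin 3 → Option ℂ)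
    (hs : ∑ j, α j = ∑ j, α' j)
    (hz : ∀ t : ℂ, ∑ j, 1/(t - α j) = ∑ j, 1/(t - α' j))
    (hw0 : ∑ i, (w i).getD 0 = ∑ i, (w' i).getD 0)
    (hw : ∀ t : ℂ, ∑ i, eaTerm t (w i) = ∑ i, eaTerm t (w' i)) :
    eaStepP1 α z w = eaStepP1 α' z w' := by
  cases z with
  | none => simp only [eaStepP1, hs, hw0]
  | some t => simp only [eaStepP1, hz t, hw t]

lemma ea_none_eval (α : Fin 4 → ℂ) (w : Fin 3 → Option ℂ) :
    eaStepP1 α none w = some ((∑ j, α j) - ∑ i, (w i).getD 0) := rfl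

lemma ea_some_eval (α : Fin 4 → ℂ) (x : ℂ) (w : Fin 3 → Option ℂ) (y : ℂ) (hxy : x ≠ y)
    (h : (∑ j, 1 / (x - α j)) - ∑ i, eaTerm x (w i) = 1/(x - y)) :
    eaStepP1 α (some x) w = some y := by
  show (let s : ℂ := (∑ j, 1 / (x - α j)) - ∑ i, eaTerm x (w i);
        if s = 0 then none else some (x - 1 / s)) = some y
  simp only [h]
  rw [if_neg (one_div_ne_zero (sub_ne_zero.mpr hxy)), one_div_one_div]
  congr 1; ring

lemma ea_some_inf (α : Fin 4 → ℂ) (x : ℂ) (w : Fin 3 → Option ℂ)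
    (h : (∑ j, 1 / (x - α j)) - ∑ i, eaTerm x (w i) = 0) :
    eaStepP1 α (some x) w = none := by
  show (let s : ℂ := (∑ j, 1 / (x - α j)) - ∑ i, eaTerm x (w i);
        if s = 0 then none else some (x - 1 / s)) = none
  simp only [h]
  simp

-- test simp normal forms
example (a b c d x y u v : ℂ) :
    (∑ j, 1 / (x - (![a,b,c,d]) j)) - ∑ i, eaTerm x ((![some y, some u, some v]) i) =
    1/(x-a) + 1/(x-b) + 1/(x-c) + 1/(x-d) - (1/(x-y) + 1/(x-u) + 1/(x-v)) := by
  simp [Fin.sum_univ_four, Fin.sum_univ_three, eaTerm]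

example (a b c d x u v : ℂ) :
    (∑ j, 1 / (x - (![a,b,c,d]) j)) - ∑ i, eaTerm x ((![none, some u, some v]) i) =
    1/(x-a) + 1/(x-b) + 1/(x-c) + 1/(x-d) - (1/(x-u) + 1/(x-v)) := by
  simp [Fin.sum_univ_four, Fin.sum_univ_three, eaTerm]

example (a b c d y u v : ℂ) :
    (∑ j, (![a,b,c,d]) j) - ∑ i, ((![some y, some u, some v] : Fin 3 → Option ℂ) i).getD 0 =
    a + b + c + d - (y + u + v) := by
  simp [Fin.sum_univ_four, Fin.sum_univ_three]

lemma key (a b c d : ℂ) (hab : a ≠ b) (hac : a ≠ c) (had : a ≠ d)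
    (hbc : b ≠ c) (hbd : b ≠ d) (hcd : c ≠ d)
    (z₁ z₂ z₃ z₄ : Option ℂ) (h12 : z₁ ≠ z₂) (h34 : z₃ ≠ z₄)
    (hA : Harmonic z₁ z₂ (some a) (some b)) (hB : Harmonic z₁ z₂ (some c) (some d))
    (hC : Harmonic z₃ z₄ (some a) (some c)) (hD : Harmonic z₃ z₄ (some b) (some d)) :
    eaStepP1 ![a,b,c,d] z₁ ![z₂, z₃, z₄] = z₂ := by
  cases z₁ with
  | none =>
    cases z₂ with
    | none => exact (harm_nn a b hA).elim
    | some y =>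
      obtain ⟨hya, hyb, hy1⟩ := harm_ns y a b hA
      obtain ⟨hyc, hyd, hy2⟩ := harm_ns y c d hB
      cases z₃ with
      | none =>
        cases z₄ with
        | none => exact (harm_nn a c hC).elim
        | some v =>
          obtain ⟨-, -, hv1⟩ := harm_ns v a c hC
          obtain ⟨-, -, hv2⟩ := harm_ns v b d hD
          exact absurd (by linear_combination (-1/2)*hy1 + (1/2)*hy2 + (1/2)*hv1 + (-1/2)*hv2 : b = c) hbc
      | some u =>
        cases z₄ with
        | none =>
          obtain ⟨-, -, hu1⟩ := harm_sn u a c hC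
          obtain ⟨-, -, hu2⟩ := harm_sn u b d hD
          exact absurd (by linear_combination (-1/2)*hy1 + (1/2)*hy2 + (1/2)*hu1 + (-1/2)*hu2 : b = c) hbc
        | some v =>
          obtain ⟨-, -, -, -, E3⟩ := harm_ss u v a c hC
          obtain ⟨-, -, -, -, E4⟩ := harm_ss u v b d hD
          have hD2 : a + c - b - d ≠ 0 := by
            intro h
            have h0 : (a-b)*(a-d) = 0 := by
              linear_combination (a - (u+v)/2) * h - (1/2) * E3 + (1/2) * E4
            rcases mul_eq_zero.mp h0 with h' | h'
            · exact hab (sub_eq_zero.mp h')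
            · exact had (sub_eq_zero.mp h')
          have huv : u + v = c + d := by
            have h0 : (a+c-b-d) * ((u+v) - (c+d)) = 0 := by
              linear_combination -E3 + E4 + (c-d)*hy2 - (c-d)*hy1
            rcases mul_eq_zero.mp h0 with h' | h'
            · exact absurd h' hD2
            · linear_combination h'
          rw [ea_none_eval]
          congr 1
          simp [Fin.sum_univ_four, Fin.sum_univ_three]
          linear_combination -hy1 - huv
  | some x =>
    cases z₂ with
    | none =>
      obtain ⟨hxa, hxb, hx1⟩ := harm_sn x a b hA
      obtain ⟨hxc, hxd, hx2⟩ := harm_sn x c d hB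
      cases z₃ with
      | none =>
        cases z₄ with
        | none => exact (harm_nn a c hC).elim
        | some v =>
          obtain ⟨-, -, hv1⟩ := harm_ns v a c hC
          obtain ⟨-, -, hv2⟩ := harm_ns v b d hD
          exact absurd (by linear_combination (-1/2)*hx1 + (1/2)*hx2 + (1/2)*hv1 + (-1/2)*hv2 : b = c) hbc
      | some u =>
        cases z₄ with
        | none =>
          obtain ⟨-, -, hu1⟩ := harm_sn u a c hC
          obtain ⟨-, -, hu2⟩ := harm_sn u b d hD
          exact absurd (by linear_combination (-1/2)*hx1 + (1/2)*hx2 + (1/2)*hu1 + (-1/2)*hu2 : b = c) hbc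
        | some v =>
          obtain ⟨hua, huc, hva, hvc, E3⟩ := harm_ss u v a c hC
          obtain ⟨hub, hud, hvb, hvd, E4⟩ := harm_ss u v b d hD
          have huv' : u ≠ v := fun h => h34 (by rw [h])
          have hD2 : a + c - b - d ≠ 0 := by
            intro h
            have h0 : (a-b)*(a-d) = 0 := by
              linear_combination (a - (u+v)/2) * h - (1/2) * E3 + (1/2) * E4
            rcases mul_eq_zero.mp h0 with h' | h'
            · exact hab (sub_eq_zero.mp h')
            · exact had (sub_eq_zero.mp h')
          have huv : u + v = c + d := by
            have h0 : (a+c-b-d) * ((u+v) - (c+d)) = 0 := by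
              linear_combination -E3 + E4 + (c-d)*hx2 - (c-d)*hx1
            rcases mul_eq_zero.mp h0 with h' | h'
            · exact absurd h' hD2
            · linear_combination h'
          have hxu : x ≠ u := by
            intro h; exact huv' (by linear_combination -huv + hx2 - 2*h)
          have hxv : x ≠ v := by
            intro h; exact huv' (by linear_combination huv - hx2 + 2*h)
          apply ea_some_inf
          have P1 : 1/(x-a) + 1/(x-b) = 0 := by
            rw [div_add_div _ _ (sub_ne_zero.mpr hxa) (sub_ne_zero.mpr hxb)]
            rw [div_eq_zero_iff]; left; linear_combination hx1
          have P2 : 1/(x-c) + 1/(x-d) = 0 := by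
            rw [div_add_div _ _ (sub_ne_zero.mpr hxc) (sub_ne_zero.mpr hxd)]
            rw [div_eq_zero_iff]; left; linear_combination hx2
          have P3 : 1/(x-u) + 1/(x-v) = 0 := by
            rw [div_add_div _ _ (sub_ne_zero.mpr hxu) (sub_ne_zero.mpr hxv)]
            rw [div_eq_zero_iff]; left; linear_combination hx2 - huv
          simp [Fin.sum_univ_four, Fin.sum_univ_three, eaTerm]
          linear_combination P1 + P2 - P3
    | some y =>
      obtain ⟨hxa, hxb, hya, hyb, E1⟩ := harm_ss x y a b hA
      obtain ⟨hxc, hxd, hyc, hyd, E2⟩ := harm_ss x y c d hB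
      have hxy : x ≠ y := fun h => h12 (by rw [h])
      have hD1 : a + b - c - d ≠ 0 := by
        intro h
        have h0 : (a-c)*(a-d) = 0 := by
          linear_combination (a - (x+y)/2) * h - (1/2) * E1 + (1/2) * E2
        rcases mul_eq_zero.mp h0 with h' | h'
        · exact hac (sub_eq_zero.mp h')
        · exact had (sub_eq_zero.mp h')
      have S1 : 1/(x-a) + 1/(x-b) = 2/(x-y) := by
        rw [div_add_div _ _ (sub_ne_zero.mpr hxa) (sub_ne_zero.mpr hxb),
          div_eq_div_iff (mul_ne_zero (sub_ne_zero.mpr hxa) (sub_ne_zero.mpr hxb))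
            (sub_ne_zero.mpr hxy)]
        linear_combination -E1
      have S2 : 1/(x-c) + 1/(x-d) = 2/(x-y) := by
        rw [div_add_div _ _ (sub_ne_zero.mpr hxc) (sub_ne_zero.mpr hxd),
          div_eq_div_iff (mul_ne_zero (sub_ne_zero.mpr hxc) (sub_ne_zero.mpr hxd))
            (sub_ne_zero.mpr hxy)]
        linear_combination -E2
      cases z₃ with
      | none =>
        cases z₄ with
        | none => exact (harm_nn a c hC).elim
        | some v =>
          obtain ⟨hva, hvc, hv1⟩ := harm_ns v a c hC
          obtain ⟨hvb, hvd, hv2⟩ := harm_ns v b d hD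
          have hxyv : x + y = 2*v := by
            have h0 : (a+b-c-d) * ((x+y) - 2*v) = 0 := by
              linear_combination -E1 + E2 - (a-c)*hv2 - (b-d)*hv1
            rcases mul_eq_zero.mp h0 with h' | h'
            · exact absurd h' hD1
            · linear_combination h'
          have hxv : x ≠ v := by
            intro h; exact hxy (by linear_combination -hxyv + 2*h)
          apply ea_some_eval _ _ _ y hxy
          have P : 1/(x-v) = 2/(x-y) := by
            rw [div_eq_div_iff (sub_ne_zero.mpr hxv) (sub_ne_zero.mpr hxy)]
            linear_combination -hxyv
          simp [Fin.sum_univ_four, Fin.sum_univ_three, eaTerm]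
          linear_combination S1 + S2 - P
      | some u =>
        cases z₄ with
        | none =>
          obtain ⟨hua, huc, hu1⟩ := harm_sn u a c hC
          obtain ⟨hub, hud, hu2⟩ := harm_sn u b d hD
          have hxyu : x + y = 2*u := by
            have h0 : (a+b-c-d) * ((x+y) - 2*u) = 0 := by
              linear_combination -E1 + E2 - (a-c)*hu2 - (b-d)*hu1
            rcases mul_eq_zero.mp h0 with h' | h'
            · exact absurd h' hD1
            · linear_combination h'
          have hxu : x ≠ u := by
            intro h; exact hxy (by linear_combination -hxyu + 2*h)
          apply ea_some_eval _ _ _ y hxy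
          have P : 1/(x-u) = 2/(x-y) := by
            rw [div_eq_div_iff (sub_ne_zero.mpr hxu) (sub_ne_zero.mpr hxy)]
            linear_combination -hxyu
          simp [Fin.sum_univ_four, Fin.sum_univ_three, eaTerm]
          linear_combination S1 + S2 - P
        | some v =>
          obtain ⟨hua, huc, hva, hvc, E3⟩ := harm_ss u v a c hC
          obtain ⟨hub, hud, hvb, hvd, E4⟩ := harm_ss u v b d hD
          have huv' : u ≠ v := fun h => h34 (by rw [h])
          have hD2 : a + c - b - d ≠ 0 := by
            intro h
            have h0 : (a-b)*(a-d) = 0 := by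
              linear_combination (a - (u+v)/2) * h - (1/2) * E3 + (1/2) * E4
            rcases mul_eq_zero.mp h0 with h' | h'
            · exact hab (sub_eq_zero.mp h')
            · exact had (sub_eq_zero.mp h')
          have Teq : (u+v)*(x+y) = 2*x*y + 2*u*v := by
            have h0 : (a+b-c-d) * ((a+c-b-d) * ((u+v)*(x+y) - (2*x*y + 2*u*v))) = 0 := by
              linear_combination
                (-(((a+b-c-d)*(a+c-b-d) - (a+b+c+d)*(a+c-b-d) + 4*(a*c-b*d))/2)) * E1
                + (-(((a+b-c-d)*(a+c-b-d) + (a+b+c+d)*(a+c-b-d) - 4*(a*c-b*d))/2)) * E2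
                + (-(((a+b-c-d)*(a+c-b-d) - (a+b+c+d)*(a+b-c-d) + 4*(a*b-c*d))/2)
                    + ((2*x*y+2*a*b-(x+y)*(a+b)) - (2*x*y+2*c*d-(x+y)*(c+d)))) * E3
                + (-(((a+b-c-d)*(a+c-b-d) + (a+b+c+d)*(a+b-c-d) - 4*(a*b-c*d))/2)
                    - ((2*x*y+2*a*b-(x+y)*(a+b)) - (2*x*y+2*c*d-(x+y)*(c+d)))) * E4
            rcases mul_eq_zero.mp h0 with h' | h'
            · exact absurd h' hD1
            rcases mul_eq_zero.mp h' with h'' | h''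
            · exact absurd h'' hD2
            · linear_combination h''
          have hxu : x ≠ u := by
            intro h
            have h0 : (x-y)*(x-v) = 0 := by linear_combination Teq + (x+y-2*v)*h
            rcases mul_eq_zero.mp h0 with h' | h'
            · exact hxy (sub_eq_zero.mp h')
            · exact huv' (by rw [← h]; exact sub_eq_zero.mp h')
          have hxv : x ≠ v := by
            intro h
            have h0 : (x-y)*(x-u) = 0 := by linear_combination Teq + (x+y-2*u)*h
            rcases mul_eq_zero.mp h0 with h' | h'
            · exact hxy (sub_eq_zero.mp h')
            · exact huv' (by rw [← sub_eq_zero.mp h']; exact h)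
          apply ea_some_eval _ _ _ y hxy
          have S3 : 2/(x-y) = 1/(x-u) + 1/(x-v) := by
            rw [div_add_div _ _ (sub_ne_zero.mpr hxu) (sub_ne_zero.mpr hxv),
              div_eq_div_iff (sub_ne_zero.mpr hxy)
                (mul_ne_zero (sub_ne_zero.mpr hxu) (sub_ne_zero.mpr hxv))]
            linear_combination -Teq
          simp [Fin.sum_univ_four, Fin.sum_univ_three, eaTerm]
          linear_combination S1 + S2 + S3

lemma harm_symm {x y : Option ℂ} {u v : ℂ} (h : Harmonic x y (some u) (some v)) :
    Harmonic y x (some u) (some v) := by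
  cases x with
  | none =>
    cases y with
    | none => exact (harm_nn u v h).elim
    | some y =>
      obtain ⟨hyu, hyv, he⟩ := harm_ns y u v h
      show (y - u) / (y - v) = -1
      rw [div_eq_iff (sub_ne_zero.mpr hyv)]
      linear_combination he
  | some x =>
    cases y with
    | none =>
      obtain ⟨hxu, hxv, he⟩ := harm_sn x u v h
      show (x - v) / (x - u) = -1
      rw [div_eq_iff (sub_ne_zero.mpr hxu)]
      linear_combination he
    | some y =>
      obtain ⟨hxu, hxv, hyu, hyv, he⟩ := harm_ss x y u v h
      show ((y - u) * (x - v)) / ((y - v) * (x - u)) = -1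
      rw [div_eq_iff (mul_ne_zero (sub_ne_zero.mpr hyv) (sub_ne_zero.mpr hxu))]
      linear_combination he


/-- Two-cycles via harmonic quadruples: if `{z₁,z₂}` is harmonic to `{α₁,α₂}` and
`{α₃,α₄}`, and `{z₃,z₄}` is harmonic to `{α₁,α₃}` and `{α₂,α₄}`, then the Jacobi
Ehrlich–Aberth map for `p = ∏(z - αᵢ)` sends `(z₁,z₂,z₃,z₄)` to `(z₂,z₁,z₄,z₃)`;
in particular `(z₁,z₂,z₃,z₄)` is periodic of period dividing 2. -/
theorem stmt11 (α : Fin 4 → ℂ) (hα : Function.Injective α)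
    (z₁ z₂ z₃ z₄ : Option ℂ) (h12 : z₁ ≠ z₂) (h34 : z₃ ≠ z₄)
    (hA : Harmonic z₁ z₂ (some (α 0)) (some (α 1)))
    (hB : Harmonic z₁ z₂ (some (α 2)) (some (α 3)))
    (hC : Harmonic z₃ z₄ (some (α 0)) (some (α 2)))
    (hD : Harmonic z₃ z₄ (some (α 1)) (some (α 3))) :
    eaStepP1 α z₁ ![z₂, z₃, z₄] = z₂ ∧
    eaStepP1 α z₂ ![z₁, z₃, z₄] = z₁ ∧
    eaStepP1 α z₃ ![z₁, z₂, z₄] = z₄ ∧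
    eaStepP1 α z₄ ![z₁, z₂, z₃] = z₃ := by
  have h01 : α 0 ≠ α 1 := fun h => absurd (hα h) (by decide)
  have h02 : α 0 ≠ α 2 := fun h => absurd (hα h) (by decide)
  have h03 : α 0 ≠ α 3 := fun h => absurd (hα h) (by decide)
  have h12' : α 1 ≠ α 2 := fun h => absurd (hα h) (by decide)
  have h13 : α 1 ≠ α 3 := fun h => absurd (hα h) (by decide)
  have h23 : α 2 ≠ α 3 := fun h => absurd (hα h) (by decide)
  refine ⟨?_, ?_, ?_, ?_⟩
  · rw [ea_congr α ![α 0, α 1, α 2, α 3] z₁ ![z₂, z₃, z₄] ![z₂, z₃, z₄]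
      (by simp [Fin.sum_univ_four]) (fun t => by simp [Fin.sum_univ_four]) rfl (fun t => rfl)]
    exact key (α 0) (α 1) (α 2) (α 3) h01 h02 h03 h12' h13 h23
      z₁ z₂ z₃ z₄ h12 h34 hA hB hC hD
  · rw [ea_congr α ![α 0, α 1, α 2, α 3] z₂ ![z₁, z₃, z₄] ![z₁, z₃, z₄]
      (by simp [Fin.sum_univ_four]) (fun t => by simp [Fin.sum_univ_four]) rfl (fun t => rfl)]
    exact key (α 0) (α 1) (α 2) (α 3) h01 h02 h03 h12' h13 h23
      z₂ z₁ z₃ z₄ h12.symm h34 (harm_symm hA) (harm_symm hB) hC hD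
  · rw [ea_congr α ![α 0, α 2, α 1, α 3] z₃ ![z₁, z₂, z₄] ![z₄, z₁, z₂]
      (by simp [Fin.sum_univ_four]; ring) (fun t => by simp [Fin.sum_univ_four]; ring)
      (by simp [Fin.sum_univ_three]; ring) (fun t => by simp [Fin.sum_univ_three]; ring)]
    exact key (α 0) (α 2) (α 1) (α 3) h02 h01 h03 h12'.symm h23 h13
      z₃ z₄ z₁ z₂ h34 h12 hC hD hA hB
  · rw [ea_congr α ![α 0, α 2, α 1, α 3] z₄ ![z₁, z₂, z₃] ![z₃, z₁, z₂]
      (by simp [Fin.sum_univ_four]; ring) (fun t => by simp [Fin.sum_univ_four]; ring)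
      (by simp [Fin.sum_univ_three]; ring) (fun t => by simp [Fin.sum_univ_three]; ring)]
    exact key (α 0) (α 2) (α 1) (α 3) h02 h01 h03 h12'.symm h23 h13
      z₄ z₃ z₁ z₂ h34.symm h12 (harm_symm hC) (harm_symm hD) hA hB
end

section
/- For λ ∈ ℂ \ {-1,0,1} with all relevant points distinct, and p_λ(z) = (z²-1)(z²-λ⁴), the points (λ, -λ, iλ, -iλ) and (λ, -λ, 0, ∞) are mapped by the Jacobi Ehrlich–Aberth map for p_λ to (-λ, λ, -iλ, iλ) and (-λ, λ, ∞, 0) respectively; hence both are periodic points of period 2. -/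
open Complex

lemma eaStepP1_some_eq_some {α : Fin 4 → ℂ} {z t : ℂ} {w : Fin 3 → Option ℂ}
    (hzt : z ≠ t) (h : (∑ j, 1 / (z - α j)) - ∑ i, eaTerm z (w i) = 1 / (z - t)) :
    eaStepP1 α (some z) w = some t := by
  simp only [eaStepP1, h, one_div_ne_zero (sub_ne_zero.mpr hzt), if_false, one_div_one_div,
    sub_sub_cancel]

lemma eaStepP1_some_eq_none {α : Fin 4 → ℂ} {z : ℂ} {w : Fin 3 → Option ℂ}
    (h : (∑ j, 1 / (z - α j)) - ∑ i, eaTerm z (w i) = 0) :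
    eaStepP1 α (some z) w = none := by
  simp only [eaStepP1, h, if_true]

lemma eaStepP1_some_eq_neg {α : Fin 4 → ℂ} {z : ℂ} {w : Fin 3 → Option ℂ} (hz : z ≠ 0)
    (hα : ∑ j, 1 / (z - α j) = 2 / z) (hw : ∑ i, eaTerm z (w i) = 3 / (2 * z)) :
    eaStepP1 α (some z) w = some (-z) := by
  refine eaStepP1_some_eq_some (fun h => hz (by linear_combination h / 2)) ?_
  have h2z : z - -z ≠ 0 := fun h => hz (by linear_combination h / 2)
  rw [hα, hw]
  field_simp
  ring

lemma one_div_sub_add_one_div_add {K : Type*} [Field K] {z a : K} (h : z ^ 2 ≠ a ^ 2) :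
    1 / (z - a) + 1 / (z + a) = 2 * z / (z ^ 2 - a ^ 2) := by
  have hm : z - a ≠ 0 := fun h' => h (by linear_combination (z + a) * h')
  have hp : z + a ≠ 0 := fun h' => h (by linear_combination (z - a) * h')
  have hd : z ^ 2 - a ^ 2 ≠ 0 := sub_ne_zero.mpr h
  field_simp
  ring

lemma sum_one_div_sub_jacobi_roots {l z : ℂ} (hl : l ^ 4 ≠ 1) (hz0 : z ≠ 0)
    (hz : z ^ 4 = l ^ 4) :
    ∑ j, 1 / (z - ![1, -1, l ^ 2, -l ^ 2] j) = 2 / z := by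
  have h1 : z ^ 2 ≠ 1 ^ 2 := fun h => hl (by linear_combination (z ^ 2 + 1) * h - hz)
  have hl0 : l ≠ 0 := by rintro rfl; exact pow_ne_zero 4 hz0 (by simpa using hz)
  have h2 : z ^ 2 ≠ (l ^ 2) ^ 2 := fun h => hl <|
    mul_left_cancel₀ (pow_ne_zero 4 hl0) (by linear_combination hz - (z ^ 2 + l ^ 4) * h)
  have hd1 : z ^ 2 - 1 ^ 2 ≠ 0 := sub_ne_zero.mpr h1
  have hd2 : z ^ 2 - (l ^ 2) ^ 2 ≠ 0 := sub_ne_zero.mpr h2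
  simp only [Fin.sum_univ_four, Matrix.cons_val_zero, Matrix.cons_val_one, Matrix.cons_val_two,
    Matrix.cons_val_three, Matrix.head_cons, Matrix.tail_cons, sub_neg_eq_add, add_assoc]
  rw [← add_assoc (1 / (z - 1)), one_div_sub_add_one_div_add h1, one_div_sub_add_one_div_add h2,
    div_add_div _ _ hd1 hd2, div_eq_div_iff (mul_ne_zero hd1 hd2) hz0]
  linear_combination 2 * hz

lemma eaStepP1_jacobi_roots_eq_neg {l z : ℂ} {w : Fin 3 → Option ℂ} (hl : l ^ 4 ≠ 1)
    (hz : z ≠ 0) (hz4 : z ^ 4 = l ^ 4) (hw : ∑ i, eaTerm z (w i) = 3 / (2 * z)) :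
    eaStepP1 ![1, -1, l ^ 2, -l ^ 2] (some z) w = some (-z) :=
  eaStepP1_some_eq_neg hz (sum_one_div_sub_jacobi_roots hl hz hz4) hw

lemma sum_eaTerm_neg_pair {z a : ℂ} (hz : z ≠ 0) (ha : a ^ 2 = -z ^ 2) :
    ∑ i, eaTerm z (![some (-z), some a, some (-a)] i) = 3 / (2 * z) := by
  have hza : z ^ 2 ≠ a ^ 2 := fun h =>
    pow_ne_zero 2 hz (by linear_combination (h + ha) / 2)
  have h2z : z - -z ≠ 0 := fun h => hz (by linear_combination h / 2)
  simp only [Fin.sum_univ_three, Matrix.cons_val_zero, Matrix.cons_val_one, Matrix.cons_val_two,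
    Matrix.head_cons, Matrix.tail_cons, eaTerm, sub_neg_eq_add, add_assoc]
  rw [one_div_sub_add_one_div_add hza, ha]
  field_simp
  ring

lemma sum_eaTerm_pair_neg {z a : ℂ} (hz : z ≠ 0) (ha : a ^ 2 = -z ^ 2) :
    ∑ i, eaTerm z (![some a, some (-a), some (-z)] i) = 3 / (2 * z) := by
  rw [← sum_eaTerm_neg_pair hz ha]
  simp only [Fin.sum_univ_three, Matrix.cons_val_zero, Matrix.cons_val_one, Matrix.cons_val_two,
    Matrix.head_cons, Matrix.tail_cons]
  ring

lemma sum_eaTerm_neg_zero_infty {z : ℂ} (hz : z ≠ 0) :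
    ∑ i, eaTerm z (![some (-z), some 0, none] i) = 3 / (2 * z) := by
  simp only [Fin.sum_univ_three, Matrix.cons_val_zero, Matrix.cons_val_one, Matrix.cons_val_two,
    Matrix.head_cons, Matrix.tail_cons, eaTerm, sub_neg_eq_add, sub_zero, add_zero]
  field_simp
  ring

theorem stmt12_general (l : ℂ) (h0 : l ≠ 0) (h4 : l ^ 4 ≠ 1) :
    (eaStepP1 ![1, -1, l ^ 2, -l ^ 2] (some l)
        ![some (-l), some (Complex.I * l), some (-(Complex.I * l))] = some (-l) ∧
      eaStepP1 ![1, -1, l ^ 2, -l ^ 2] (some (-l))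
        ![some l, some (Complex.I * l), some (-(Complex.I * l))] = some l ∧
      eaStepP1 ![1, -1, l ^ 2, -l ^ 2] (some (Complex.I * l))
        ![some l, some (-l), some (-(Complex.I * l))] = some (-(Complex.I * l)) ∧
      eaStepP1 ![1, -1, l ^ 2, -l ^ 2] (some (-(Complex.I * l)))
        ![some l, some (-l), some (Complex.I * l)] = some (Complex.I * l)) ∧
    (eaStepP1 ![1, -1, l ^ 2, -l ^ 2] (some l)
        ![some (-l), some 0, none] = some (-l) ∧
      eaStepP1 ![1, -1, l ^ 2, -l ^ 2] (some (-l))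
        ![some l, some 0, none] = some l ∧
      eaStepP1 ![1, -1, l ^ 2, -l ^ 2] (some 0)
        ![some l, some (-l), none] = none ∧
      eaStepP1 ![1, -1, l ^ 2, -l ^ 2] none
        ![some l, some (-l), some 0] = some 0) := by
  have hIl : I * l ≠ 0 := mul_ne_zero I_ne_zero h0
  have hl2 : (I * l) ^ 2 = -l ^ 2 := by linear_combination l ^ 2 * I_sq
  have hl4 : (I * l) ^ 4 = l ^ 4 := by linear_combination (l ^ 4 * (I ^ 2 - 1)) * I_sq
  have hml2 : l ^ 2 = -(I * l) ^ 2 := by rw [hl2, neg_neg]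
  refine ⟨⟨?_, ?_, ?_, ?_⟩, ⟨?_, ?_, ?_, ?_⟩⟩
  · exact eaStepP1_jacobi_roots_eq_neg h4 h0 rfl (sum_eaTerm_neg_pair h0 hl2)
  · simpa using eaStepP1_jacobi_roots_eq_neg h4 (neg_ne_zero.2 h0) (by ring)
      (sum_eaTerm_neg_pair (neg_ne_zero.2 h0) (by rw [hl2, neg_sq]))
  · exact eaStepP1_jacobi_roots_eq_neg h4 hIl hl4 (sum_eaTerm_pair_neg hIl hml2)
  · simpa using eaStepP1_jacobi_roots_eq_neg h4 (neg_ne_zero.2 hIl)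
      (by rw [Even.neg_pow (by decide), hl4])
      (sum_eaTerm_pair_neg (neg_ne_zero.2 hIl) (by rw [neg_sq, hml2]))
  · exact eaStepP1_jacobi_roots_eq_neg h4 h0 rfl (sum_eaTerm_neg_zero_infty h0)
  · simpa using eaStepP1_jacobi_roots_eq_neg h4 (neg_ne_zero.2 h0) (by ring)
      (sum_eaTerm_neg_zero_infty (neg_ne_zero.2 h0))
  · refine eaStepP1_some_eq_none ?_
    simp [Fin.sum_univ_four, Fin.sum_univ_three, eaTerm]
  · simp only [eaStepP1, Fin.sum_univ_four, Fin.sum_univ_three, Matrix.cons_val_zero,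
      Matrix.cons_val_one, Matrix.cons_val_two, Matrix.cons_val_three, Matrix.head_cons,
      Matrix.tail_cons, Option.getD_some, Option.some.injEq]
    ring

/-- For `p_l(z) = (z²-1)(z²-l⁴)` (roots `1, -1, l², -l²`), the points
`(l, -l, il, -il)` and `(l, -l, 0, ∞)` are mapped by the Jacobi Ehrlich–Aberth
map to `(-l, l, -il, il)` and `(-l, l, ∞, 0)` respectively; hence both are
periodic points of period 2. -/
theorem stmt12 (l : ℂ) (h0 : l ≠ 0) (h1 : l ≠ 1) (hm1 : l ≠ -1) (h4 : l ^ 4 ≠ 1) :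
    (eaStepP1 ![1, -1, l ^ 2, -l ^ 2] (some l)
        ![some (-l), some (Complex.I * l), some (-(Complex.I * l))] = some (-l) ∧
      eaStepP1 ![1, -1, l ^ 2, -l ^ 2] (some (-l))
        ![some l, some (Complex.I * l), some (-(Complex.I * l))] = some l ∧
      eaStepP1 ![1, -1, l ^ 2, -l ^ 2] (some (Complex.I * l))
        ![some l, some (-l), some (-(Complex.I * l))] = some (-(Complex.I * l)) ∧
      eaStepP1 ![1, -1, l ^ 2, -l ^ 2] (some (-(Complex.I * l)))
        ![some l, some (-l), some (Complex.I * l)] = some (Complex.I * l)) ∧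
    (eaStepP1 ![1, -1, l ^ 2, -l ^ 2] (some l)
        ![some (-l), some 0, none] = some (-l) ∧
      eaStepP1 ![1, -1, l ^ 2, -l ^ 2] (some (-l))
        ![some l, some 0, none] = some l ∧
      eaStepP1 ![1, -1, l ^ 2, -l ^ 2] (some 0)
        ![some l, some (-l), none] = none ∧
      eaStepP1 ![1, -1, l ^ 2, -l ^ 2] none
        ![some l, some (-l), some 0] = some 0) :=
  stmt12_general l h0 h4
end

section
/- Let p be monic of degree d, α ∈ ℂ, p̃(z) = (z - α)p(z), and z_1,…,z_d ∈ ℂ \ {α} pairwise distinct. If the Gauss–Seidel Weierstrass iteration GSW_p(z_1,…,z_d) is well defined and none of its coordinates equals α, then GSW_{p̃}(z_1,…,z_d, α) is well defined and equals (GSW_p(z_1,…,z_d), α). -/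
open Polynomial

/-- The Weierstrass update step `W_p(v i; v_1,…,v̂_i,…,v_n) =
v i - p(v i)/∏_{j≠i}(v i - v j)`. -/
noncomputable def wStep (p : Polynomial ℂ) {n : ℕ} (v : Fin n → ℂ) (i : Fin n) : ℂ :=
  v i - p.eval (v i) / ∏ j ∈ Finset.univ.erase i, (v i - v j)

/-- The intermediate states of the Gauss–Seidel Weierstrass iteration:
`gsState p v k` is the vector after the first `k` coordinates have been updated
(one at a time, each update using already-updated previous coordinates). -/
noncomputable def gsState (p : Polynomial ℂ) {n : ℕ} (v : Fin n → ℂ) : ℕ → Fin n → ℂ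
  | 0 => v
  | k + 1 =>
      if h : k < n then
        Function.update (gsState p v k) ⟨k, h⟩ (wStep p (gsState p v k) ⟨k, h⟩)
      else gsState p v k

/-- The Gauss–Seidel variant of the Weierstrass method: update all `n`
coordinates sequentially. -/
noncomputable def gsw (p : Polynomial ℂ) {n : ℕ} (v : Fin n → ℂ) : Fin n → ℂ :=
  gsState p v n

/-- The Gauss–Seidel Weierstrass iteration is well defined at `v`: at each
sequential update, the coordinate being updated differs from all others. -/
def GswWellDef (p : Polynomial ℂ) {n : ℕ} (v : Fin n → ℂ) : Prop :=
  ∀ k (h : k < n) j, j ≠ (⟨k, h⟩ : Fin n) →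
    gsState p v k ⟨k, h⟩ ≠ gsState p v k j

lemma gsState_apply_of_le (p : Polynomial ℂ) {n : ℕ} (v : Fin n → ℂ) :
    ∀ k (j : Fin n), k ≤ j.val → gsState p v k j = v j := by
  intro k
  induction k with
  | zero => intro j _; rfl
  | succ k ih =>
    intro j hj
    show gsState p v (k+1) j = v j
    rw [gsState]
    split_ifs with h
    · rw [Function.update_of_ne, ih j (Nat.le_of_succ_le hj)]
      intro hje; rw [hje] at hj; exact Nat.not_succ_le_self k hj
    · exact ih j (Nat.le_of_succ_le hj)

lemma erase_castSucc {d : ℕ} (i : Fin d) :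
    (Finset.univ.erase (i.castSucc) : Finset (Fin (d+1))) =
      insert (Fin.last d) ((Finset.univ.erase i).image Fin.castSucc) := by
  ext j
  simp only [Finset.mem_erase, Finset.mem_univ, and_true, Finset.mem_insert,
    Finset.mem_image]
  rcases Fin.eq_castSucc_or_eq_last j with ⟨m, rfl⟩ | rfl
  · simp [Fin.castSucc_inj, (Fin.castSucc_lt_last m).ne, eq_comm]
  · simp [(Fin.castSucc_lt_last i).ne']

lemma wStep_snoc (p : Polynomial ℂ) (a : ℂ) {d : ℕ} (s : Fin d → ℂ) (i : Fin d)
    (hx : s i ≠ a) :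
    wStep ((X - C a) * p) (Fin.snoc s a) i.castSucc = wStep p s i := by
  unfold wStep
  rw [Fin.snoc_castSucc]
  have hnm : Fin.last d ∉ (Finset.univ.erase i).image Fin.castSucc := by
    simp [Fin.ext_iff, (Fin.castSucc_lt_last _).ne]
  have hinj : ∀ x ∈ Finset.univ.erase i, ∀ y ∈ Finset.univ.erase i,
      Fin.castSucc x = Fin.castSucc y → x = y :=
    fun x _ y _ h => Fin.castSucc_injective d h
  have hprod : (∏ j ∈ Finset.univ.erase i.castSucc,
      (s i - (Fin.snoc s a : Fin (d+1) → ℂ) j)) =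
      (s i - a) * ∏ j ∈ Finset.univ.erase i, (s i - s j) := by
    rw [erase_castSucc, Finset.prod_insert hnm]
    have himg := Finset.prod_image
      (f := fun j : Fin (d+1) => s i - (Fin.snoc s a : Fin (d+1) → ℂ) j) hinj
    rw [himg]
    simp
  rw [hprod, eval_mul, eval_sub, eval_X, eval_C,
    mul_div_mul_left _ _ (sub_ne_zero.mpr hx)]

lemma gsState_snoc (p : Polynomial ℂ) (a : ℂ) {d : ℕ} (z : Fin d → ℂ)
    (hza : ∀ i, z i ≠ a) :
    ∀ k, k ≤ d → gsState ((X - C a) * p) (Fin.snoc z a) k =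
      Fin.snoc (gsState p z k) a := by
  intro k
  induction k with
  | zero => intro _; rfl
  | succ k ih =>
    intro hk1
    have hkd : k < d := hk1
    have hx : gsState p z k ⟨k, hkd⟩ ≠ a := by
      rw [gsState_apply_of_le p z k ⟨k, hkd⟩ le_rfl]; exact hza _
    show gsState ((X - C a) * p) (Fin.snoc z a) (k+1) = _
    rw [gsState, dif_pos (show k < d + 1 by omega), ih (le_of_lt hkd)]
    have hcast : (⟨k, show k < d + 1 by omega⟩ : Fin (d+1)) =
        (⟨k, hkd⟩ : Fin d).castSucc := rfl
    rw [hcast, wStep_snoc p a _ ⟨k, hkd⟩ hx, ← Fin.snoc_update]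
    rw [gsState, dif_pos hkd]

/-- Embedding into one degree higher: if `p` is monic of degree `d`,
`p̃ = (X - α) p`, the `z_i ∈ ℂ \ {α}` are pairwise distinct, `GSW_p(z)` is well
defined and none of its coordinates equals `α`, then `GSW_{p̃}(z, α)` is well
defined and equals `(GSW_p(z), α)`. -/
theorem stmt16 (d : ℕ) (p : Polynomial ℂ) (hp : p.Monic) (hdeg : p.natDegree = d)
    (a : ℂ) (z : Fin d → ℂ) (hz : Function.Injective z) (hza : ∀ i, z i ≠ a)
    (hwd : GswWellDef p z) (hout : ∀ i, gsw p z i ≠ a) :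
    GswWellDef ((X - C a) * p) (Fin.snoc z a) ∧
      gsw ((X - C a) * p) (Fin.snoc z a) = Fin.snoc (gsw p z) a := by
  have key := gsState_snoc p a z hza
  have hlast : (⟨d, Nat.lt_succ_self d⟩ : Fin (d+1)) = Fin.last d := rfl
  have hfin : gsw ((X - C a) * p) (Fin.snoc z a) = Fin.snoc (gsw p z) a := by
    show gsState ((X - C a) * p) (Fin.snoc z a) (d+1) = _
    rw [gsState, dif_pos (Nat.lt_succ_self d), key d le_rfl]
    have hw : wStep ((X - C a) * p) (Fin.snoc (gsState p z d) a)
        ⟨d, Nat.lt_succ_self d⟩ = a := by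
      rw [hlast]
      unfold wStep
      rw [Fin.snoc_last]
      simp
    rw [hw, hlast, Fin.update_snoc_last]
    rfl
  refine ⟨?_, hfin⟩
  intro k h j hj
  rcases Nat.lt_or_ge k d with hkd | hge
  · rw [key k (le_of_lt hkd)]
    have hcast : (⟨k, h⟩ : Fin (d+1)) = (⟨k, hkd⟩ : Fin d).castSucc := rfl
    rw [hcast, Fin.snoc_castSucc]
    rcases Fin.eq_castSucc_or_eq_last j with ⟨m, rfl⟩ | rfl
    · rw [Fin.snoc_castSucc]
      refine hwd k hkd m fun hm => hj ?_
      rw [hm, hcast]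
    · rw [Fin.snoc_last, gsState_apply_of_le p z k ⟨k, hkd⟩ le_rfl]
      exact hza _
  · have hkd : k = d := by omega
    subst hkd
    rw [key k le_rfl]
    have hcast : (⟨k, h⟩ : Fin (k+1)) = Fin.last k := rfl
    rw [hcast, Fin.snoc_last]
    rcases Fin.eq_castSucc_or_eq_last j with ⟨m, rfl⟩ | rfl
    · rw [Fin.snoc_castSucc]
      exact (hout m).symm
    · exact absurd (hcast.symm) hj
end
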